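/- Let u and v be reduced words with respect to G. Then T(u) and T(v) are reduced words with respect to G′, and the following are equivalent: (a) u = v in G; (b) T(u) = T(v) in G′ and π_t(u) = π_t(v). -/

import Mathlib

/-!
Multiple HNN-extension `G = ⟨H, t₁, …, tₙ | tᵢ⁻¹ a tᵢ = φᵢ(a) (a ∈ Aᵢ)⟩`, presented
as a `PresentedGroup` on the alphabet `H ⊕ ι`.
-/

/-- Relators of the multiple HNN-extension presentation. -/
def hnnRels {H : Type*} [Group H] {ι : Type*} (A B : ι → Subgroup H)
    (φ : ∀ i, A i ≃* B i) : Set (FreeGroup (H ⊕ ι)) :=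
  {r | ∃ h₁ h₂ : H, r = FreeGroup.of (Sum.inl h₁) * FreeGroup.of (Sum.inl h₂) *
        (FreeGroup.of (Sum.inl (h₁ * h₂)))⁻¹} ∪
  {r | ∃ (i : ι) (a : A i), r = (FreeGroup.of (Sum.inr i))⁻¹ *
        FreeGroup.of (Sum.inl (a : H)) * FreeGroup.of (Sum.inr i) *
        (FreeGroup.of (Sum.inl ((φ i a : B i) : H)))⁻¹}

/-- The multiple HNN-extension of `H`. -/
abbrev MHNN {H : Type*} [Group H] {ι : Type*} (A B : ι → Subgroup H)
    (φ : ∀ i, A i ≃* B i) :=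
  PresentedGroup (hnnRels A B φ)

/-- Canonical generators: `Sum.inl h` for `h ∈ H`, `Sum.inr i` for the stable letter `tᵢ`. -/
def gen {H : Type*} [Group H] {ι : Type*} (A B : ι → Subgroup H)
    (φ : ∀ i, A i ≃* B i) (x : H ⊕ ι) : MHNN A B φ :=
  PresentedGroup.of x

/-- The element represented by the word `u₀ t_{idx 0}^{e 0} u₁ ⋯ t_{idx (ℓ-1)}^{e (ℓ-1)} u_ℓ`. -/
def wordProd {H : Type*} [Group H] {ι : Type*} (A B : ι → Subgroup H)
    (φ : ∀ i, A i ≃* B i) (ℓ : ℕ) (u : ℕ → H) (idx : ℕ → ι) (e : ℕ → ℤ) :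
    MHNN A B φ :=
  gen A B φ (Sum.inl (u 0)) *
    ((List.range ℓ).map fun k =>
      gen A B φ (Sum.inr (idx k)) ^ e k * gen A B φ (Sum.inl (u (k + 1)))).prod

/-- `side A B i e` is `A i (e)`, i.e. `A i` if `e = 1` and `B i` if `e = -1`. -/
def side {H : Type*} [Group H] {ι : Type*} (A B : ι → Subgroup H) (i : ι) (e : ℤ) :
    Subgroup H :=
  if e = 1 then A i else B i

/-- The word is reduced: exponents are `±1`, no factor `tᵢ^{-α} w tᵢ^{α}` with `w ∈ A i (α)`. -/
def ReducedWord {H : Type*} [Group H] {ι : Type*} (A B : ι → Subgroup H)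
    (ℓ : ℕ) (u : ℕ → H) (idx : ℕ → ι) (e : ℕ → ℤ) : Prop :=
  (∀ k < ℓ, e k = 1 ∨ e k = -1) ∧
  ∀ k, k + 1 < ℓ → idx k = idx (k + 1) → e k = -e (k + 1) →
    u (k + 1) ∉ side A B (idx k) (e (k + 1))


/-- The partial isomorphisms `φ i : A i ≃* B i` and `φ k : A k ≃* B k` are equal
as partial isomorphisms from `A` to `B`. -/
def SamePartialIso {H : Type*} [Group H] {ι : Type*} (A B : ι → Subgroup H)
    (φ : ∀ i, A i ≃* B i) (i k : ι) : Prop :=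
  A i = A k ∧ B i = B k ∧
    ∀ (a : H) (hi : a ∈ A i) (hk : a ∈ A k),
      ((φ i ⟨a, hi⟩ : B i) : H) = ((φ k ⟨a, hk⟩ : B k) : H)


/-!
The multiple HNN-extension has a normal form: after fixing right transversals of all the `A i`
and `B i`, each element is uniquely `h₀ t_{p₁} h₁ ⋯ t_{pₘ} hₘ` without pinches and with every
`h_k` (`k ≥ 1`) in the transversal belonging to the letter `p_k`. Uniqueness comes from letting
the group act on normal words, exactly as Mathlib does for one stable letter. Hence reduced words
with the same value have the same stable letters (Britton's lemma), and
`g u₀ t_i^ε ⋯ = v₀ t_i^ε ⋯` forces `x = v₀⁻¹ g u₀ ∈ A_i(ε)`; moving `x` across `t_i^ε` as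
`φ_i^ε(x)` reduces the equation to the tails. This induction consults only the partial
isomorphisms carried by the letters, and `T` replaces each `φ_i` by the equal `φ_{τ(i)}`, so it
decides equality in `G` and in `G′` alike. `T(u)` is reduced in `G′` because consecutive stable
letters of `T(u)` differ in their second index.
-/

open Function

theorem mul_mul_eq_mul_mul_iff_of_conj {G : Type*} [Group G] {a b c y s p q : G}
    (h : b⁻¹ * a * c * s = s * y) : a * (c * s * p) = b * s * q ↔ y * p = q := by
  have hlhs : a * (c * s * p) = b * s * (y * p) :=
    calc a * (c * s * p) = b * (b⁻¹ * a * c * s) * p := by group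
      _ = b * s * (y * p) := by rw [h]; group
  rw [hlhs, mul_right_inj]

namespace MHNN

variable {H : Type*} [Group H] {ι : Type*} (A B : ι → Subgroup H) (φ : ∀ i, A i ≃* B i)

def of : H →* MHNN A B φ :=
  MonoidHom.mk' (fun h => PresentedGroup.of (Sum.inl h)) fun h₁ h₂ => by
    have := PresentedGroup.one_of_mem (rels := hnnRels A B φ) (Or.inl ⟨h₁, h₂, rfl⟩)
    simp only [map_mul, map_inv] at this
    exact (mul_inv_eq_one.1 this).symm

def t (i : ι) : MHNN A B φ := PresentedGroup.of (Sum.inr i)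

theorem of_eq_gen (h : H) : of A B φ h = gen A B φ (Sum.inl h) := rfl

theorem t_eq_gen (i : ι) : t A B φ i = gen A B φ (Sum.inr i) := rfl

variable {A B φ}

theorem inv_t_mul_of_mul_t (i : ι) (a : A i) :
    (t A B φ i)⁻¹ * of A B φ a * t A B φ i = of A B φ (φ i a) := by
  have := PresentedGroup.one_of_mem (rels := hnnRels A B φ) (Or.inr ⟨i, a, rfl⟩)
  simp only [map_mul, map_inv] at this
  exact mul_inv_eq_one.1 this

theorem of_mul_t (i : ι) (a : A i) :
    of A B φ a * t A B φ i = t A B φ i * of A B φ (φ i a) := by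
  rw [← inv_t_mul_of_mul_t]
  group

theorem inv_t_mul_of (i : ι) (a : A i) :
    (t A B φ i)⁻¹ * of A B φ a = of A B φ (φ i a) * (t A B φ i)⁻¹ := by
  rw [← inv_t_mul_of_mul_t]
  group

theorem t_mul_of (i : ι) (b : B i) :
    t A B φ i * of A B φ b = of A B φ ((φ i).symm b) * t A B φ i := by
  simpa using (of_mul_t (φ := φ) i ((φ i).symm b)).symm

theorem of_mul_inv_t (i : ι) (b : B i) :
    of A B φ b * (t A B φ i)⁻¹ = (t A B φ i)⁻¹ * of A B φ ((φ i).symm b) := by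
  simpa using (inv_t_mul_of (φ := φ) i ((φ i).symm b)).symm

@[elab_as_elim]
theorem induction_on {motive : MHNN A B φ → Prop} (x : MHNN A B φ)
    (of : ∀ h, motive (of A B φ h)) (t : ∀ i, motive (t A B φ i))
    (mul : ∀ x y, motive x → motive y → motive (x * y))
    (inv : ∀ x, motive x → motive x⁻¹) : motive x := by
  let S : Subgroup (MHNN A B φ) :=
    { carrier := {x | motive x}
      one_mem' := by simpa using of 1
      mul_mem' := mul _ _
      inv_mem' := inv _ }
  exact PresentedGroup.generated_by _ S (Sum.rec of t) x

/-! ### Letters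

A letter `p : ι × ℤˣ` stands for `t_{p.1}^{p.2}`. -/

def invLetter (p : ι × ℤˣ) : ι × ℤˣ := (p.1, -p.2)

@[simp]
theorem invLetter_invLetter (p : ι × ℤˣ) : invLetter (invLetter p) = p := by
  simp [invLetter]

variable (A B φ)

/-- The subgroup `S` with `t_{p.1}^{p.2} S t_{p.1}^{-p.2} ⊆ H`: `B i` for `t_i` and `A i`
for `t_i⁻¹`. -/
def toSubgroup (p : ι × ℤˣ) : Subgroup H := if p.2 = 1 then B p.1 else A p.1

def tPow (p : ι × ℤˣ) : MHNN A B φ := t A B φ p.1 ^ (p.2 : ℤ)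

@[simp]
theorem tPow_invLetter (p : ι × ℤˣ) : tPow A B φ (invLetter p) = (tPow A B φ p)⁻¹ := by
  simp [tPow, invLetter]

theorem toSubgroup_invLetter (p : ι × ℤˣ) :
    toSubgroup A B (invLetter p) = if p.2 = 1 then A p.1 else B p.1 := by
  obtain ⟨i, u⟩ := p
  rcases Int.units_eq_one_or u with rfl | rfl <;> simp [invLetter, toSubgroup]

variable {A B}

/-- Conjugation by `t_{p.1}^{p.2}` on `toSubgroup A B p`: `(φ i)⁻¹` for `t_i`, `φ i` for
`t_i⁻¹`. -/
def toSubgroupEquiv (p : ι × ℤˣ) : toSubgroup A B p ≃* toSubgroup A B (invLetter p) :=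
  if hu : p.2 = 1 then
    (MulEquiv.subgroupCongr (by simp [toSubgroup, hu])).trans
      ((φ p.1).symm.trans (MulEquiv.subgroupCongr (by simp [toSubgroup_invLetter, hu])))
  else
    (MulEquiv.subgroupCongr (by simp [toSubgroup, hu])).trans
      ((φ p.1).trans (MulEquiv.subgroupCongr (by simp [toSubgroup_invLetter, hu])))

theorem toSubgroupEquiv_one_coe (i : ι) (b : toSubgroup A B (i, 1)) :
    (toSubgroupEquiv φ (i, 1) b : H) = ((φ i).symm ⟨b, b.2⟩ : H) := by
  simp [toSubgroupEquiv, MulEquiv.subgroupCongr]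
  rfl

theorem toSubgroupEquiv_neg_one_coe (i : ι) (a : toSubgroup A B (i, -1)) :
    (toSubgroupEquiv φ (i, -1) a : H) = (φ i ⟨a, a.2⟩ : H) := by
  simp [toSubgroupEquiv, MulEquiv.subgroupCongr]
  rfl

@[simp]
theorem toSubgroupEquiv_invLetter_apply (p : ι × ℤˣ) (s : toSubgroup A B p) :
    (toSubgroupEquiv φ (invLetter p) (toSubgroupEquiv φ p s) : H) = s := by
  obtain ⟨i, u⟩ := p
  rcases Int.units_eq_one_or u with rfl | rfl
  · exact (toSubgroupEquiv_neg_one_coe φ i _).trans (by simp [toSubgroupEquiv_one_coe])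
  · exact (toSubgroupEquiv_one_coe φ i _).trans (by simp [toSubgroupEquiv_neg_one_coe])

theorem tPow_mul_of (p : ι × ℤˣ) (s : toSubgroup A B p) :
    tPow A B φ p * of A B φ s = of A B φ (toSubgroupEquiv φ p s) * tPow A B φ p := by
  obtain ⟨i, u⟩ := p
  rcases Int.units_eq_one_or u with rfl | rfl
  · rw [toSubgroupEquiv_one_coe]
    simpa [tPow] using t_mul_of (φ := φ) i ⟨s, s.2⟩
  · rw [toSubgroupEquiv_neg_one_coe]
    simpa [tPow] using inv_t_mul_of (φ := φ) i ⟨s, s.2⟩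

theorem of_toSubgroupEquiv_eq_conj (p : ι × ℤˣ) (s : toSubgroup A B p) :
    of A B φ (toSubgroupEquiv φ p s) = tPow A B φ p * of A B φ s * (tPow A B φ p)⁻¹ := by
  rw [tPow_mul_of, mul_inv_cancel_right]

variable (A B)

/-- `⟨h₀, [(p₁, h₁), …, (pₘ, hₘ)]⟩` stands for `h₀ t_{p₁} h₁ ⋯ t_{pₘ} hₘ`; the chain condition
forbids the pinches `t_p s t_p⁻¹` with `s ∈ toSubgroup A B p`. -/
structure ListWord : Type _ where
  head : H
  toList : List ((ι × ℤˣ) × H)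
  chain : toList.IsChain (fun a b => a.2 ∈ toSubgroup A B a.1 → b.1 ≠ invLetter a.1)

variable {A B}

def ListWord.prod (w : ListWord A B) : MHNN A B φ :=
  of A B φ w.head * (w.toList.map fun x => tPow A B φ x.1 * of A B φ x.2).prod

instance : MulAction H (ListWord A B) where
  smul g w := { w with head := g * w.head }
  one_smul w := congrArg (fun h => ListWord.mk h w.toList w.chain) (one_mul w.head)
  mul_smul g₁ g₂ w := congrArg (fun h => ListWord.mk h w.toList w.chain) (mul_assoc g₁ g₂ w.head)

@[simp]
theorem ListWord.smul_head (g : H) (w : ListWord A B) : (g • w).head = g * w.head := rfl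

@[simp]
theorem ListWord.smul_toList (g : H) (w : ListWord A B) : (g • w).toList = w.toList := rfl

@[simp]
theorem ListWord.prod_smul (g : H) (w : ListWord A B) :
    (g • w).prod φ = of A B φ g * w.prod φ := by
  simp [ListWord.prod, mul_assoc]

namespace NormalWord

variable (A B)

structure TransversalPair : Type _ where
  set : ι × ℤˣ → Set H
  compl : ∀ p, Subgroup.IsComplement (toSubgroup A B p : Subgroup H) (set p)

instance TransversalPair.nonempty : Nonempty (TransversalPair A B) := by
  choose t ht using fun p ↦ (toSubgroup A B p).exists_isComplement_right 1
  exact ⟨⟨t, fun p ↦ (ht p).1⟩⟩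

variable {A B}

structure _root_.MHNN.NormalWord (d : TransversalPair A B) : Type _ extends ListWord A B where
  mem_set : ∀ (p : ι × ℤˣ) (g : H), (p, g) ∈ toList → g ∈ d.set p

variable {d : TransversalPair A B}

@[ext]
theorem ext {w w' : NormalWord d}
    (h1 : w.head = w'.head) (h2 : w.toList = w'.toList) : w = w' := by
  rcases w with ⟨⟨⟩, _⟩; cases w'; simp_all

variable (d)

@[simps]
def empty : NormalWord d :=
  { head := 1
    toList := []
    mem_set := by simp
    chain := List.isChain_nil }

@[simps]
def ofGroup (g : H) : NormalWord d :=
  { head := g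
    toList := []
    mem_set := by simp
    chain := List.isChain_nil }

variable {d}

instance : MulAction H (NormalWord d) where
  smul g w := { w with head := g * w.head }
  one_smul _ := ext (one_mul _) rfl
  mul_smul _ _ _ := ext (mul_assoc _ _ _) rfl

@[simp]
theorem group_smul_head (g : H) (w : NormalWord d) : (g • w).head = g * w.head := rfl

@[simp]
theorem group_smul_toList (g : H) (w : NormalWord d) : (g • w).toList = w.toList := rfl

@[simps]
def cons (g : H) (p : ι × ℤˣ) (w : NormalWord d) (h1 : w.head ∈ d.set p)
    (h2 : ∀ p' ∈ w.toList.head?.map Prod.fst, w.head ∈ toSubgroup A B p → p' ≠ invLetter p) :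
    NormalWord d :=
  { head := g,
    toList := (p, w.head) :: w.toList,
    mem_set := by
      intro p' g' h'
      rcases List.mem_cons.1 h' with h' | h'
      · cases h'
        exact h1
      · exact w.mem_set _ _ h'
    chain := by
      refine List.isChain_cons.2 ⟨?_, w.chain⟩
      rintro ⟨p', g'⟩ hp' hw1
      exact h2 _ (by simp_all) hw1 }

@[elab_as_elim]
def consRecOn {motive : NormalWord d → Sort*} (w : NormalWord d)
    (ofGroup : ∀ g, motive (ofGroup d g))
    (cons : ∀ (g : H) (p : ι × ℤˣ) (w : NormalWord d) (h1 : w.head ∈ d.set p)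
      (h2 : ∀ p' ∈ w.toList.head?.map Prod.fst, w.head ∈ toSubgroup A B p → p' ≠ invLetter p),
      motive w → motive (cons g p w h1 h2)) : motive w := by
  rcases w with ⟨⟨g, l, chain⟩, mem_set⟩
  induction l generalizing g with
  | nil => exact ofGroup _
  | cons a l ih =>
    exact cons g a.1
      { head := a.2
        toList := l
        mem_set := fun _ _ h => mem_set _ _ (List.mem_cons_of_mem _ h),
        chain := (List.isChain_cons.1 chain).2 }
      (mem_set a.1 a.2 List.mem_cons_self)
      (by simpa using (List.isChain_cons.1 chain).1)
      (ih _ _ _)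

@[simp]
theorem consRecOn_cons {motive : NormalWord d → Sort*}
    (g : H) (p : ι × ℤˣ) (w : NormalWord d) (h1 : w.head ∈ d.set p)
    (h2 : ∀ p' ∈ w.toList.head?.map Prod.fst, w.head ∈ toSubgroup A B p → p' ≠ invLetter p)
    (ofGroup : ∀ g, motive (ofGroup d g))
    (cons : ∀ (g : H) (p : ι × ℤˣ) (w : NormalWord d) (h1 : w.head ∈ d.set p)
      (h2 : ∀ p' ∈ w.toList.head?.map Prod.fst, w.head ∈ toSubgroup A B p → p' ≠ invLetter p),
      motive w → motive (cons g p w h1 h2)) :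
    consRecOn (NormalWord.cons g p w h1 h2) ofGroup cons =
      cons g p w h1 h2 (consRecOn w ofGroup cons) := rfl

@[simp]
theorem smul_cons (g₁ g₂ : H) (p : ι × ℤˣ) (w : NormalWord d) (h1 : w.head ∈ d.set p)
    (h2 : ∀ p' ∈ w.toList.head?.map Prod.fst, w.head ∈ toSubgroup A B p → p' ≠ invLetter p) :
    g₁ • cons g₂ p w h1 h2 = cons (g₁ * g₂) p w h1 h2 :=
  rfl

variable (d)

/-- Splits `g = s * r` with `s ∈ toSubgroup A B p` and `r` in the transversal, and moves `s`
across `t_p`. -/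
noncomputable def letterSMulGroup (p : ι × ℤˣ) (g : H) :
    toSubgroup A B (invLetter p) × d.set p :=
  let g' := (d.compl p).equiv g
  (toSubgroupEquiv φ p g'.1, g'.2)

variable {d}

def Cancels (p : ι × ℤˣ) (w : NormalWord d) : Prop :=
  w.head ∈ toSubgroup A B p ∧ w.toList.head?.map Prod.fst = some (invLetter p)

def letterSMulWithCancel (p : ι × ℤˣ) (w : NormalWord d) : Cancels p w → NormalWord d :=
  consRecOn w
    (fun _ can => by simp [Cancels] at can)
    (fun g _ w _ _ _ can => (toSubgroupEquiv φ p ⟨g, can.1⟩ : H) • w)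

/-- The normal form of `t_p * w`. -/
noncomputable def letterSMul (p : ι × ℤˣ) (w : NormalWord d) : NormalWord d :=
  letI := Classical.dec
  if h : Cancels p w then letterSMulWithCancel φ p w h
  else
    let g' := letterSMulGroup φ d p w.head
    cons g'.1 p (((g'.2 : H) * w.head⁻¹ : H) • w)
      (by simp)
      (by
        intro p' hp' hmem hpp'
        have hw : w.head ∈ toSubgroup A B p := by
          have : (((d.compl p).equiv w.head).2 : H) ∈ toSubgroup A B p := by
            simpa only [g', letterSMulGroup, group_smul_head, inv_mul_cancel_right] using hmem
          rw [(d.compl p).equiv_snd_eq_inv_mul] at this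
          exact (mul_mem_cancel_left (inv_mem ((d.compl p).equiv w.head).1.2)).1 this
        exact h ⟨hw, by simpa [hpp'] using hp'⟩)

theorem not_cancels_of_cons_hyp (p : ι × ℤˣ) (w : NormalWord d)
    (h2 : ∀ p' ∈ w.toList.head?.map Prod.fst, w.head ∈ toSubgroup A B p → p' ≠ invLetter p) :
    ¬ Cancels p w := by
  rintro ⟨hw, hhead⟩
  exact h2 (invLetter p) (by simp [hhead]) hw rfl

theorem letterSMul_cancels_iff (p : ι × ℤˣ) (w : NormalWord d) :
    Cancels (invLetter p) (letterSMul φ p w) ↔ ¬ Cancels p w := by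
  by_cases h : Cancels p w
  · simp only [letterSMul, h, dite_true, not_true_eq_false, iff_false]
    induction w using consRecOn with
    | ofGroup => simp [Cancels] at h
    | cons g p' w h1 h2 _ =>
      intro hc
      obtain ⟨hg, rfl⟩ : g ∈ toSubgroup A B p ∧ p' = invLetter p := by simpa [Cancels] using h
      refine not_cancels_of_cons_hyp (invLetter p) w h2 ?_
      simp only [letterSMulWithCancel, consRecOn_cons] at hc
      exact ⟨(mul_mem_cancel_left (toSubgroupEquiv φ p ⟨g, hg⟩).2).1 hc.1, hc.2⟩
  · simp only [letterSMul, dif_neg h]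
    simpa [Cancels] using h

theorem letterSMul_invLetter_of_not_cancels {p : ι × ℤˣ} {w : NormalWord d}
    (h : ¬ Cancels p w) : letterSMul φ (invLetter p) (letterSMul φ p w) = w := by
  have hcan := (letterSMul_cancels_iff φ p w).2 h
  rw [letterSMul, dif_pos hcan]
  unfold letterSMul at hcan ⊢
  simp only [dif_neg h] at hcan ⊢
  refine ext ?_ rfl
  rw [letterSMulWithCancel, consRecOn_cons]
  simp only [letterSMulGroup, group_smul_head, Subtype.coe_eta,
    toSubgroupEquiv_invLetter_apply, inv_mul_cancel_right]
  exact (d.compl p).equiv_fst_mul_equiv_snd w.head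

theorem letterSMul_invLetter_of_cancels {p : ι × ℤˣ} {w : NormalWord d}
    (h : Cancels p w) : letterSMul φ (invLetter p) (letterSMul φ p w) = w := by
  have hncan : ¬ Cancels (invLetter p) (letterSMul φ p w) :=
    fun hc => (letterSMul_cancels_iff φ p w).1 hc h
  rw [letterSMul, dif_neg hncan]
  simp only [letterSMul, dif_pos h]
  cases w using consRecOn with
  | ofGroup => simp [Cancels] at h
  | cons g p' w h1 h2 _ =>
    obtain ⟨hg, rfl⟩ : g ∈ toSubgroup A B p ∧ p' = invLetter p := by simpa [Cancels] using h
    have hsplit : (d.compl (invLetter p)).equiv (toSubgroupEquiv φ p ⟨g, hg⟩ * w.head) =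
        (toSubgroupEquiv φ p ⟨g, hg⟩, ⟨w.head, h1⟩) := by
      rw [(d.compl (invLetter p)).equiv_mul_left _ w.head,
        (d.compl _).equiv_fst_eq_one_of_mem_of_one_mem (one_mem _) h1,
        (d.compl _).equiv_snd_eq_self_of_mem_of_one_mem (one_mem _) h1]
      simp
    refine ext ?_ ?_
    · simp only [letterSMulWithCancel, consRecOn_cons, letterSMulGroup, cons_head,
        group_smul_head, hsplit, toSubgroupEquiv_invLetter_apply]
    · simp [letterSMulWithCancel, letterSMulGroup, hsplit]

theorem letterSMul_invLetter (p : ι × ℤˣ) (w : NormalWord d) :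
    letterSMul φ (invLetter p) (letterSMul φ p w) = w := by
  by_cases h : Cancels p w
  · exact letterSMul_invLetter_of_cancels φ h
  · exact letterSMul_invLetter_of_not_cancels φ h

theorem letterSMul_group_smul (p : ι × ℤˣ) (s : toSubgroup A B p) (w : NormalWord d) :
    letterSMul φ p ((s : H) • w) = (toSubgroupEquiv φ p s : H) • letterSMul φ p w := by
  unfold letterSMul
  have hc : Cancels p ((s : H) • w) ↔ Cancels p w := by
    simp [Cancels, mul_mem_cancel_left s.2]
  by_cases hcan : Cancels p w
  · simp only [dif_pos (hc.2 hcan), dif_pos hcan]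
    cases w using consRecOn with
    | ofGroup => simp [Cancels] at hcan
    | cons g p' w h1 h2 _ =>
      simp only [smul_cons, letterSMulWithCancel, consRecOn_cons]
      rw [← mul_smul, ← Subgroup.coe_mul, ← map_mul]
      rfl
  · rw [dif_neg (mt hc.1 hcan), dif_neg hcan]
    refine ext ?_ ?_ <;>
      simp [letterSMulGroup, (d.compl p).equiv_mul_left s w.head, mul_assoc]

theorem letterSMul_one_group_smul (i : ι) (a : A i) (w : NormalWord d) :
    letterSMul φ (i, 1) ((φ i a : H) • w) = (a : H) • letterSMul φ (i, 1) w := by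
  rw [letterSMul_group_smul φ (i, 1) ⟨φ i a, (φ i a).2⟩, toSubgroupEquiv_one_coe]
  congr 2
  exact (φ i).symm_apply_apply a

noncomputable def tPerm (i : ι) : Equiv.Perm (NormalWord d) where
  toFun := letterSMul φ (i, 1)
  invFun := letterSMul φ (i, -1)
  left_inv := letterSMul_invLetter φ (i, 1)
  right_inv w := by simpa [invLetter] using letterSMul_invLetter φ (i, -1) w

noncomputable def actHom : MHNN A B φ →* Equiv.Perm (NormalWord d) :=
  PresentedGroup.toGroup (f := Sum.elim (MulAction.toPermHom H (NormalWord d)) (tPerm φ)) <| by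
    rintro r (⟨h₁, h₂, rfl⟩ | ⟨i, a, rfl⟩)
    · simp only [map_mul, map_inv, FreeGroup.lift_apply_of, Sum.elim_inl]
      group
    · simp only [map_mul, map_inv, FreeGroup.lift_apply_of, Sum.elim_inl, Sum.elim_inr,
        mul_inv_eq_one]
      ext w : 1
      change (tPerm φ i).symm ((a : H) • tPerm φ i w) = (φ i a : H) • w
      rw [Equiv.symm_apply_eq]
      exact (letterSMul_one_group_smul φ i a w).symm

noncomputable instance : MulAction (MHNN A B φ) (NormalWord d) :=
  MulAction.ofEndHom <| (MulAction.toEndHom (M := Equiv.Perm (NormalWord d))).comp (actHom φ)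

theorem of_smul_eq_smul (h : H) (w : NormalWord d) : of A B φ h • w = h • w := by
  change actHom φ (PresentedGroup.of (Sum.inl h)) w = h • w
  rw [actHom, PresentedGroup.toGroup.of]
  rfl

theorem t_smul_eq_letterSMul (i : ι) (w : NormalWord d) :
    t A B φ i • w = letterSMul φ (i, 1) w := by
  change actHom φ (PresentedGroup.of (Sum.inr i)) w = _
  rw [actHom, PresentedGroup.toGroup.of]
  rfl

theorem tPow_smul_eq_letterSMul (p : ι × ℤˣ) (w : NormalWord d) :
    tPow A B φ p • w = letterSMul φ p w := by
  obtain ⟨i, u⟩ := p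
  rcases Int.units_eq_one_or u with rfl | rfl
  · simpa [tPow] using t_smul_eq_letterSMul φ i w
  · rw [tPow, Units.val_neg, Units.val_one, zpow_neg_one, inv_smul_eq_iff,
      t_smul_eq_letterSMul]
    exact (letterSMul_invLetter φ (i, -1) w).symm

@[simp]
theorem prod_group_smul (g : H) (w : NormalWord d) :
    (g • w).prod φ = of A B φ g * w.prod φ := by
  simp [ListWord.prod, mul_assoc]

@[simp]
theorem prod_cons (g : H) (p : ι × ℤˣ) (w : NormalWord d) (h1 : w.head ∈ d.set p)
    (h2 : ∀ p' ∈ w.toList.head?.map Prod.fst, w.head ∈ toSubgroup A B p → p' ≠ invLetter p) :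
    (cons g p w h1 h2).prod φ = of A B φ g * (tPow A B φ p * w.prod φ) := by
  simp [ListWord.prod, cons, mul_assoc]

theorem prod_letterSMul (p : ι × ℤˣ) (w : NormalWord d) :
    (letterSMul φ p w).prod φ = tPow A B φ p * w.prod φ := by
  rw [letterSMul]
  split_ifs with hcan
  · cases w using consRecOn with
    | ofGroup => simp [Cancels] at hcan
    | cons g p' w h1 h2 _ =>
      obtain ⟨hg, rfl⟩ : g ∈ toSubgroup A B p ∧ p' = invLetter p := by simpa [Cancels] using hcan
      simp only [letterSMulWithCancel, consRecOn_cons, prod_group_smul, prod_cons,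
        of_toSubgroupEquiv_eq_conj, tPow_invLetter]
      group
  · simp only [letterSMulGroup, prod_cons, prod_group_smul, of_toSubgroupEquiv_eq_conj]
    have hsr := (d.compl p).equiv_fst_mul_equiv_snd w.head
    generalize (d.compl p).equiv w.head = sr at hsr ⊢
    obtain ⟨s, r⟩ := sr
    calc tPow A B φ p * of A B φ s * (tPow A B φ p)⁻¹ *
          (tPow A B φ p * (of A B φ (r * w.head⁻¹) * w.prod φ))
        = tPow A B φ p * of A B φ (s * r * w.head⁻¹) * w.prod φ := by
          simp only [map_mul]
          group
      _ = tPow A B φ p * w.prod φ := by rw [hsr, mul_inv_cancel, map_one, mul_one]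

@[simp]
theorem prod_smul (g : MHNN A B φ) (w : NormalWord d) : (g • w).prod φ = g * w.prod φ := by
  induction g using MHNN.induction_on generalizing w with
  | of h => rw [of_smul_eq_smul, prod_group_smul]
  | t i => rw [t_smul_eq_letterSMul, prod_letterSMul, tPow, Units.val_one, zpow_one]
  | mul x y ihx ihy => rw [mul_smul, ihx, ihy, mul_assoc]
  | inv x ih => rw [← mul_right_inj x, ← ih, smul_inv_smul, mul_inv_cancel_left]

@[simp]
theorem prod_smul_empty (w : NormalWord d) : w.prod φ • empty d = w := by
  induction w using consRecOn with
  | ofGroup g => exact ext (by simp [ListWord.prod, of_smul_eq_smul]) rfl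
  | cons g p w h1 h2 ih =>
    rw [prod_cons, mul_smul, mul_smul, ih, tPow_smul_eq_letterSMul, of_smul_eq_smul, letterSMul,
      dif_neg (not_cancels_of_cons_hyp p w h2)]
    have hfst : ((d.compl p).equiv w.head).1 = 1 :=
      (d.compl p).equiv_fst_eq_one_of_mem_of_one_mem (one_mem _) h1
    refine ext ?_ ?_
    · simp [letterSMulGroup, hfst]
    · simp [letterSMulGroup, (d.compl p).equiv_snd_eq_inv_mul, hfst]

variable (d) in
noncomputable def equiv : MHNN A B φ ≃ NormalWord d where
  toFun g := g • empty d
  invFun w := w.prod φ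
  left_inv g := by
    change (g • empty d).prod φ = g
    rw [prod_smul]
    simp [ListWord.prod]
  right_inv w := by simp

theorem prod_injective : Injective fun w : NormalWord d => w.prod φ :=
  (equiv φ d).symm.injective

/-- If `t_p` cancelled against `w`, then `g` would lie in `toSubgroup A B p` too, and
`t_p g t_{p}⁻¹` would be a pinch of `(p, g) :: l`. -/
theorem not_cancels_of_isChain_cons (g : H) (p : ι × ℤˣ)
    (l : List ((ι × ℤˣ) × H))
    (chain : ((p, g) :: l).IsChain fun a b => a.2 ∈ toSubgroup A B a.1 → b.1 ≠ invLetter a.1)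
    (w : NormalWord d) (hletters : w.toList.map Prod.fst = l.map Prod.fst)
    (hhead : ∀ q ∈ l.head?.map Prod.fst, w.head⁻¹ * g ∈ toSubgroup A B (invLetter q)) :
    ¬ Cancels p w := by
  rintro ⟨hw, hfirst⟩
  rw [← List.head?_map, hletters, List.head?_map] at hfirst
  obtain ⟨⟨q, h⟩, l', rfl⟩ : ∃ b l', l = b :: l' := by
    cases l with
    | nil => simp at hfirst
    | cons b l' => exact ⟨b, l', rfl⟩
  obtain rfl : q = invLetter p := by simpa using hfirst
  have hq := hhead _ rfl
  rw [invLetter_invLetter] at hq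
  have hg : g ∈ toSubgroup A B p := by simpa using mul_mem hw hq
  exact (List.isChain_cons_cons.1 chain).1 hg rfl

end NormalWord

open NormalWord

theorem of_injective : Injective (of A B φ) := by
  obtain ⟨d⟩ := TransversalPair.nonempty A B
  intro x y h
  simpa [of_smul_eq_smul] using congrArg (fun g => (g • empty d).head) h

namespace ListWord

theorem exists_normalWord_prod_eq (d : TransversalPair A B) (w : ListWord A B) :
    ∃ w' : NormalWord d, w'.prod φ = w.prod φ ∧
      w'.toList.map Prod.fst = w.toList.map Prod.fst ∧
      ∀ p ∈ w.toList.head?.map Prod.fst, w'.head⁻¹ * w.head ∈ toSubgroup A B (invLetter p) := by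
  obtain ⟨g, l, chain⟩ := w
  induction l generalizing g with
  | nil => exact ⟨ofGroup d g, by simp [ListWord.prod], rfl, by simp⟩
  | cons a l ih =>
    obtain ⟨w', hprod, hletters, hhead⟩ := ih a.2 (List.isChain_cons.1 chain).2
    have hnc : ¬ Cancels a.1 w' :=
      not_cancels_of_isChain_cons a.2 a.1 l chain w' hletters hhead
    refine ⟨(of A B φ g * tPow A B φ a.1) • w', ?_, ?_, ?_⟩
    · rw [NormalWord.prod_smul, hprod]
      simp [ListWord.prod, mul_assoc]
    · simp [mul_smul, of_smul_eq_smul, tPow_smul_eq_letterSMul, letterSMul, dif_neg hnc,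
        hletters]
    · rintro p ⟨⟩
      simp only [mul_smul, of_smul_eq_smul, tPow_smul_eq_letterSMul, letterSMul, dif_neg hnc,
        group_smul_head, cons_head, mul_inv_rev, inv_mul_cancel_right]
      exact inv_mem (letterSMulGroup φ d a.1 w'.head).1.2

/-- **Britton's lemma** -/
theorem map_fst_eq_and_of_prod_eq {w₁ w₂ : ListWord A B} (hprod : w₁.prod φ = w₂.prod φ) :
    w₁.toList.map Prod.fst = w₂.toList.map Prod.fst ∧
      ∀ p ∈ w₁.toList.head?.map Prod.fst, w₁.head⁻¹ * w₂.head ∈ toSubgroup A B (invLetter p) := by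
  obtain ⟨d⟩ := TransversalPair.nonempty A B
  obtain ⟨w₁', hprod₁, hletters₁, hhead₁⟩ := exists_normalWord_prod_eq φ d w₁
  obtain ⟨w₂', hprod₂, hletters₂, hhead₂⟩ := exists_normalWord_prod_eq φ d w₂
  obtain rfl : w₁' = w₂' := prod_injective φ (by simp only [hprod₁, hprod₂, hprod])
  refine ⟨hletters₁.symm.trans hletters₂, fun p hp => ?_⟩
  have hp₂ : p ∈ w₂.toList.head?.map Prod.fst := by
    rwa [← List.head?_map, ← hletters₂, hletters₁, List.head?_map]
  simpa [mul_assoc] using mul_mem (inv_mem (hhead₁ p hp)) (hhead₂ p hp₂)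

end ListWord

/-! ### Words given by sequences -/

variable (A B)

theorem wordProd_zero (u : ℕ → H) (idx : ℕ → ι) (e : ℕ → ℤ) :
    wordProd A B φ 0 u idx e = of A B φ (u 0) := by
  simp [wordProd, of_eq_gen]

theorem wordProd_succ (ℓ : ℕ) (u : ℕ → H) (idx : ℕ → ι) (e : ℕ → ℤ) :
    wordProd A B φ (ℓ + 1) u idx e =
      of A B φ (u 0) * t A B φ (idx 0) ^ e 0 *
        wordProd A B φ ℓ (fun k => u (k + 1)) (fun k => idx (k + 1)) (fun k => e (k + 1)) := by
  simp [wordProd, List.range_succ_eq_map, of_eq_gen, t_eq_gen, mul_assoc, Function.comp_def]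

theorem wordProd_congr {ℓ : ℕ} (u : ℕ → H) {idx idx' : ℕ → ι} {e e' : ℕ → ℤ}
    (h : ∀ k < ℓ, idx k = idx' k ∧ e k = e' k) :
    wordProd A B φ ℓ u idx e = wordProd A B φ ℓ u idx' e' := by
  refine congrArg (_ * ·) (congrArg List.prod (List.map_congr_left fun k hk => ?_))
  rw [(h k (List.mem_range.1 hk)).1, (h k (List.mem_range.1 hk)).2]

variable {A B}

theorem ReducedWord.congr {ℓ : ℕ} {u : ℕ → H} {idx idx' : ℕ → ι} {e e' : ℕ → ℤ}
    (h : ReducedWord A B ℓ u idx e) (hsame : ∀ k < ℓ, idx k = idx' k ∧ e k = e' k) :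
    ReducedWord A B ℓ u idx' e' := by
  refine ⟨fun k hk => (hsame k hk).2 ▸ h.1 k hk, fun k hk hidx he => ?_⟩
  obtain ⟨hi₀, he₀⟩ := hsame k (by omega)
  obtain ⟨hi₁, he₁⟩ := hsame (k + 1) hk
  rw [← hi₀, ← he₁]
  exact h.2 k hk (by rw [hi₀, hi₁, hidx]) (by rw [he₀, he₁, he])

theorem ReducedWord.tail {ℓ : ℕ} {u : ℕ → H} {idx : ℕ → ι} {e : ℕ → ℤ}
    (h : ReducedWord A B (ℓ + 1) u idx e) :
    ReducedWord A B ℓ (fun k => u (k + 1)) (fun k => idx (k + 1)) (fun k => e (k + 1)) :=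
  ⟨fun k hk => h.1 (k + 1) (by omega), fun k hk => h.2 (k + 1) (by omega)⟩

theorem reducedWord_of_ne_succ {ℓ : ℕ} {u : ℕ → H} {idx : ℕ → ι} {e : ℕ → ℤ}
    (he : ∀ k < ℓ, e k = 1 ∨ e k = -1) (hidx : ∀ k, idx k ≠ idx (k + 1)) :
    ReducedWord A B ℓ u idx e :=
  ⟨he, fun k _ h => absurd h (hidx k)⟩

/-- `e` as a unit when `e = ±1`, and `-1` for every other `e`. -/
def toUnit (e : ℤ) : ℤˣ := if e = 1 then 1 else -1

theorem coe_toUnit {e : ℤ} (he : e = 1 ∨ e = -1) : (toUnit e : ℤ) = e := by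
  rcases he with rfl | rfl <;> simp [toUnit]

theorem side_eq_toSubgroup (i : ι) {e : ℤ} (he : e = 1 ∨ e = -1) :
    side A B i e = toSubgroup A B (invLetter (i, toUnit e)) := by
  rcases he with rfl | rfl <;> simp [side, toSubgroup, toUnit, invLetter]

def letterList (ℓ : ℕ) (u : ℕ → H) (idx : ℕ → ι) (e : ℕ → ℤ) : List ((ι × ℤˣ) × H) :=
  (List.range ℓ).map fun k => ((idx k, toUnit (e k)), u (k + 1))

theorem ReducedWord.isChain_letterList {ℓ : ℕ} {u : ℕ → H} {idx : ℕ → ι} {e : ℕ → ℤ}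
    (h : ReducedWord A B ℓ u idx e) :
    (letterList ℓ u idx e).IsChain
      fun a b => a.2 ∈ toSubgroup A B a.1 → b.1 ≠ invLetter a.1 := by
  rw [letterList, List.isChain_map, List.isChain_range]
  intro k hk hmem hpinch
  obtain ⟨hidx, hunit⟩ := Prod.ext_iff.1 hpinch
  have hunit' : toUnit (e (k + 1)) = -toUnit (e k) := by simpa [invLetter] using hunit
  have he : e k = -e (k + 1) := by
    rw [← coe_toUnit (h.1 k (by omega)), ← coe_toUnit (h.1 (k + 1) (by omega)), hunit']
    simp
  refine h.2 k (by omega) hidx.symm he ?_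
  rw [side_eq_toSubgroup _ (h.1 (k + 1) (by omega)), hunit']
  simpa [invLetter] using hmem

def ReducedWord.toListWord {ℓ : ℕ} {u : ℕ → H} {idx : ℕ → ι} {e : ℕ → ℤ}
    (h : ReducedWord A B ℓ u idx e) : ListWord A B :=
  ⟨u 0, letterList ℓ u idx e, ReducedWord.isChain_letterList h⟩

theorem ReducedWord.prod_toListWord {ℓ : ℕ} {u : ℕ → H} {idx : ℕ → ι} {e : ℕ → ℤ}
    (h : ReducedWord A B ℓ u idx e) :
    (ReducedWord.toListWord h).prod φ = wordProd A B φ ℓ u idx e := by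
  refine congrArg (_ * ·) (congrArg List.prod ?_)
  simp only [ReducedWord.toListWord, letterList, List.map_map]
  refine List.map_congr_left fun k hk => ?_
  simp [tPow, coe_toUnit (h.1 k (List.mem_range.1 hk)), of_eq_gen, t_eq_gen]

variable {φ}

theorem ReducedWord.letters_eq_of_wordProd_eq {ℓ m : ℕ} {u v : ℕ → H} {iu iv : ℕ → ι}
    {eu ev : ℕ → ℤ} (hu : ReducedWord A B ℓ u iu eu) (hv : ReducedWord A B m v iv ev)
    (h : wordProd A B φ ℓ u iu eu = wordProd A B φ m v iv ev) :
    ℓ = m ∧ ∀ k < m, iu k = iv k ∧ eu k = ev k := by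
  have hletters := (ListWord.map_fst_eq_and_of_prod_eq φ (w₁ := ReducedWord.toListWord hu)
    (w₂ := ReducedWord.toListWord hv) (by simp only [ReducedWord.prod_toListWord, h])).1
  simp only [ReducedWord.toListWord, letterList, List.map_map, Function.comp_def] at hletters
  obtain rfl : ℓ = m := by simpa using congrArg List.length hletters
  refine ⟨rfl, fun k hk => ?_⟩
  have hk' := List.map_inj_left.1 hletters k (List.mem_range.2 hk)
  obtain ⟨hidx, hunit⟩ := Prod.ext_iff.1 hk'
  refine ⟨hidx, ?_⟩
  rw [← coe_toUnit (hu.1 k hk), ← coe_toUnit (hv.1 k hk)]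
  exact congrArg Units.val hunit

theorem ReducedWord.mem_side_of_of_mul_wordProd_eq {ℓ : ℕ} {u v : ℕ → H} {idx : ℕ → ι}
    {e : ℕ → ℤ} (hu : ReducedWord A B (ℓ + 1) u idx e) (hv : ReducedWord A B (ℓ + 1) v idx e)
    {g : H} (h : of A B φ g * wordProd A B φ (ℓ + 1) u idx e = wordProd A B φ (ℓ + 1) v idx e) :
    (v 0)⁻¹ * g * u 0 ∈ side A B (idx 0) (e 0) := by
  have hcoset := (ListWord.map_fst_eq_and_of_prod_eq φ (w₁ := g • ReducedWord.toListWord hu)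
    (w₂ := ReducedWord.toListWord hv)
    (by rw [ListWord.prod_smul, ReducedWord.prod_toListWord, ReducedWord.prod_toListWord, h])).2
    (idx 0, toUnit (e 0)) (by simp [ReducedWord.toListWord, letterList, List.range_succ_eq_map])
  rw [← side_eq_toSubgroup _ (hu.1 0 (Nat.succ_pos ℓ))] at hcoset
  simpa [ReducedWord.toListWord, mul_assoc] using inv_mem hcoset

variable (A B φ) in
/-- `x ∈ A_i(e)` and `y = φ_i^e(x)`, so that `x t_i^e = t_i^e y`. -/
def Transfer (i : ι) (e : ℤ) (x y : H) : Prop :=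
  (e = 1 ∧ ∃ h : x ∈ A i, y = φ i ⟨x, h⟩) ∨ (e = -1 ∧ ∃ h : x ∈ B i, y = (φ i).symm ⟨x, h⟩)

theorem Transfer.of_mul_t_zpow {i : ι} {e : ℤ} {x y : H} (h : Transfer A B φ i e x y) :
    of A B φ x * t A B φ i ^ e = t A B φ i ^ e * of A B φ y := by
  rcases h with ⟨rfl, hx, rfl⟩ | ⟨rfl, hx, rfl⟩
  · exact (zpow_one (t A B φ i)).symm ▸ of_mul_t i ⟨x, hx⟩
  · simpa using of_mul_inv_t (φ := φ) i ⟨x, hx⟩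

theorem exists_transfer_of_mem_side {i : ι} {e : ℤ} (he : e = 1 ∨ e = -1) {x : H}
    (hx : x ∈ side A B i e) : ∃ y, Transfer A B φ i e x y := by
  rcases he with rfl | rfl
  · exact ⟨_, Or.inl ⟨rfl, hx, rfl⟩⟩
  · exact ⟨_, Or.inr ⟨rfl, hx, rfl⟩⟩

theorem SamePartialIso.symm_apply_eq {i k : ι} (h : SamePartialIso A B φ i k) (b : H)
    (hi : b ∈ B i) (hk : b ∈ B k) :
    (((φ i).symm ⟨b, hi⟩ : A i) : H) = (((φ k).symm ⟨b, hk⟩ : A k) : H) := by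
  have ha : (((φ i).symm ⟨b, hi⟩ : A i) : H) ∈ A k := h.1 ▸ ((φ i).symm ⟨b, hi⟩).2
  have hφ : φ k ⟨_, ha⟩ = ⟨b, hk⟩ := by
    ext
    rw [← h.2.2 _ ((φ i).symm ⟨b, hi⟩).2 ha, Subtype.coe_eta, MulEquiv.apply_symm_apply]
  rw [← hφ, MulEquiv.symm_apply_apply]

theorem SamePartialIso.transfer_iff {i k : ι} (h : SamePartialIso A B φ i k) {e : ℤ} {x y : H} :
    Transfer A B φ i e x y ↔ Transfer A B φ k e x y := by
  have ⟨hA, hB, hφ⟩ := h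
  constructor
  · rintro (⟨he, hx, rfl⟩ | ⟨he, hx, rfl⟩)
    · exact Or.inl ⟨he, hA ▸ hx, hφ x hx _⟩
    · exact Or.inr ⟨he, hB ▸ hx, SamePartialIso.symm_apply_eq h x hx _⟩
  · rintro (⟨he, hx, rfl⟩ | ⟨he, hx, rfl⟩)
    · exact Or.inl ⟨he, hA ▸ hx, (hφ x _ hx).symm⟩
    · exact Or.inr ⟨he, hB ▸ hx, (SamePartialIso.symm_apply_eq h x _ hx).symm⟩

theorem ReducedWord.of_mul_wordProd_succ_eq_iff {ℓ : ℕ} {u v : ℕ → H} {idx : ℕ → ι}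
    {e : ℕ → ℤ} (hu : ReducedWord A B (ℓ + 1) u idx e) (hv : ReducedWord A B (ℓ + 1) v idx e)
    (g : H) :
    of A B φ g * wordProd A B φ (ℓ + 1) u idx e = wordProd A B φ (ℓ + 1) v idx e ↔
      ∃ y, Transfer A B φ (idx 0) (e 0) ((v 0)⁻¹ * g * u 0) y ∧
        of A B φ y * wordProd A B φ ℓ (fun k => u (k + 1)) (fun k => idx (k + 1))
          (fun k => e (k + 1)) =
        wordProd A B φ ℓ (fun k => v (k + 1)) (fun k => idx (k + 1)) (fun k => e (k + 1)) := by
  have hconj {y : H} (hy : Transfer A B φ (idx 0) (e 0) ((v 0)⁻¹ * g * u 0) y) :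
      (of A B φ (v 0))⁻¹ * of A B φ g * of A B φ (u 0) * t A B φ (idx 0) ^ e 0 =
        t A B φ (idx 0) ^ e 0 * of A B φ y := by
    simpa using hy.of_mul_t_zpow
  constructor
  · intro h
    obtain ⟨y, hy⟩ := exists_transfer_of_mem_side (hu.1 0 (Nat.succ_pos ℓ))
      (ReducedWord.mem_side_of_of_mul_wordProd_eq hu hv h)
    rw [wordProd_succ, wordProd_succ, mul_mul_eq_mul_mul_iff_of_conj (hconj hy)] at h
    exact ⟨y, hy, h⟩
  · rintro ⟨y, hy, h⟩
    rw [wordProd_succ, wordProd_succ, mul_mul_eq_mul_mul_iff_of_conj (hconj hy)]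
    exact h

/-- The reindexed extension has a stable letter for each `j : κ`, carrying `φ (f j)`. -/
theorem ReducedWord.of_mul_wordProd_eq_iff_reindex {κ : Type*} (f : κ → ι) {ℓ : ℕ}
    {u v : ℕ → H} {idx : ℕ → ι} {idx' : ℕ → κ} {e : ℕ → ℤ}
    (hu : ReducedWord A B ℓ u idx e) (hv : ReducedWord A B ℓ v idx e)
    (hu' : ReducedWord (fun j => A (f j)) (fun j => B (f j)) ℓ u idx' e)
    (hv' : ReducedWord (fun j => A (f j)) (fun j => B (f j)) ℓ v idx' e)
    (hsame : ∀ k < ℓ, SamePartialIso A B φ (idx k) (f (idx' k))) (g : H) :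
    of A B φ g * wordProd A B φ ℓ u idx e = wordProd A B φ ℓ v idx e ↔
      of _ _ (fun j => φ (f j)) g * wordProd _ _ (fun j => φ (f j)) ℓ u idx' e =
        wordProd _ _ (fun j => φ (f j)) ℓ v idx' e := by
  induction ℓ generalizing u v idx idx' e g with
  | zero =>
    simp only [wordProd_zero, ← map_mul, (of_injective _).eq_iff]
  | succ ℓ ih =>
    rw [ReducedWord.of_mul_wordProd_succ_eq_iff hu hv,
      ReducedWord.of_mul_wordProd_succ_eq_iff hu' hv']
    exact exists_congr fun y => and_congr (SamePartialIso.transfer_iff (hsame 0 ℓ.succ_pos))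
      (ih (ReducedWord.tail hu) (ReducedWord.tail hv) (ReducedWord.tail hu')
        (ReducedWord.tail hv') (fun k hk => hsame (k + 1) (by omega)) y)

theorem ReducedWord.wordProd_eq_iff_reindex {κ : Type*} (f : κ → ι) {ℓ : ℕ}
    {u v : ℕ → H} {idx : ℕ → ι} {idx' : ℕ → κ} {e : ℕ → ℤ}
    (hu : ReducedWord A B ℓ u idx e) (hv : ReducedWord A B ℓ v idx e)
    (hu' : ReducedWord (fun j => A (f j)) (fun j => B (f j)) ℓ u idx' e)
    (hv' : ReducedWord (fun j => A (f j)) (fun j => B (f j)) ℓ v idx' e)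
    (hsame : ∀ k < ℓ, SamePartialIso A B φ (idx k) (f (idx' k))) :
    wordProd A B φ ℓ u idx e = wordProd A B φ ℓ v idx e ↔
      wordProd _ _ (fun j => φ (f j)) ℓ u idx' e = wordProd _ _ (fun j => φ (f j)) ℓ v idx' e := by
  simpa using ReducedWord.of_mul_wordProd_eq_iff_reindex f hu hv hu' hv' hsame 1

theorem ReducedWord.wordProd_eq_iff_relabel {κ : Type*} (f : κ → ι) (L : ℕ → ι → κ)
    (hL : ∀ k i, SamePartialIso A B φ i (f (L k i))) {ℓ m : ℕ} {u v : ℕ → H}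
    {iu iv : ℕ → ι} {eu ev : ℕ → ℤ}
    (hu : ReducedWord A B ℓ u iu eu) (hv : ReducedWord A B m v iv ev)
    (hu' : ReducedWord (fun j => A (f j)) (fun j => B (f j)) ℓ u (fun k => L k (iu k)) eu)
    (hv' : ReducedWord (fun j => A (f j)) (fun j => B (f j)) m v (fun k => L k (iv k)) ev) :
    wordProd A B φ ℓ u iu eu = wordProd A B φ m v iv ev ↔
      wordProd _ _ (fun j => φ (f j)) ℓ u (fun k => L k (iu k)) eu =
          wordProd _ _ (fun j => φ (f j)) m v (fun k => L k (iv k)) ev ∧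
        ℓ = m ∧ ∀ k < m, iu k = iv k ∧ eu k = ev k := by
  rcases eq_or_ne ℓ m with rfl | hℓ
  swap
  · exact iff_of_false (fun h => hℓ (ReducedWord.letters_eq_of_wordProd_eq hu hv h).1)
      fun h => hℓ h.2.1
  by_cases hseq : ∀ k < ℓ, iu k = iv k ∧ eu k = ev k
  swap
  · exact iff_of_false (fun h => hseq (ReducedWord.letters_eq_of_wordProd_eq hu hv h).2)
      fun h => hseq h.2.2
  have hLseq : ∀ k < ℓ, L k (iu k) = L k (iv k) ∧ eu k = ev k :=
    fun k hk => ⟨by rw [(hseq k hk).1], (hseq k hk).2⟩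
  rw [and_iff_left ⟨rfl, hseq⟩, wordProd_congr A B φ u hseq, wordProd_congr _ _ _ u hLseq]
  exact ReducedWord.wordProd_eq_iff_reindex f (ReducedWord.congr hu hseq) hv
    (ReducedWord.congr hu' hLseq) hv' fun k _ => hL k (iv k)

end MHNN

open MHNN

/-- Let `τ(i) = min {k | φ_k = φ_i}` and let `G′` be the HNN-extension with
stable letters `t_{j,b}` for `j` in the range of `τ` and `b ∈ {0,1}`, where `t_{j,b}` has the
associated partial isomorphism `φ_j`. Let `T` replace the `r`-th stable letter `t_{i_r}^{α_r}`
of a word by `t_{τ(i_r), r mod 2}^{α_r}`. If `u, v` are reduced words w.r.t. `G`, then `T(u)`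
and `T(v)` are reduced w.r.t. `G′`, and `u = v` in `G` iff `T(u) = T(v)` in `G′` and
`π_t(u) = π_t(v)`. -/
theorem transducer_correct {H : Type*} [Group H] {n : ℕ}
    (A B : Fin n → Subgroup H) (φ : ∀ i, A i ≃* B i)
    (τ : Fin n → Fin n)
    (hτ : ∀ i, SamePartialIso A B φ i (τ i) ∧
      ∀ k, SamePartialIso A B φ i k → τ i ≤ k)
    (ℓ m : ℕ) (u v : ℕ → H) (iu iv : ℕ → Fin n) (eu ev : ℕ → ℤ)
    (hu : ReducedWord A B ℓ u iu eu) (hv : ReducedWord A B m v iv ev) :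
    ReducedWord (fun p : {j : Fin n // ∃ i, τ i = j} × Bool => A p.1.1)
        (fun p => B p.1.1) ℓ u
        (fun k => (⟨τ (iu k), iu k, rfl⟩, decide ((k + 1) % 2 = 1))) eu ∧
    ReducedWord (fun p : {j : Fin n // ∃ i, τ i = j} × Bool => A p.1.1)
        (fun p => B p.1.1) m v
        (fun k => (⟨τ (iv k), iv k, rfl⟩, decide ((k + 1) % 2 = 1))) ev ∧
    (wordProd A B φ ℓ u iu eu = wordProd A B φ m v iv ev ↔
      (wordProd (fun p : {j : Fin n // ∃ i, τ i = j} × Bool => A p.1.1)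
          (fun p => B p.1.1) (fun p => φ p.1.1) ℓ u
          (fun k => (⟨τ (iu k), iu k, rfl⟩, decide ((k + 1) % 2 = 1))) eu =
        wordProd (fun p : {j : Fin n // ∃ i, τ i = j} × Bool => A p.1.1)
          (fun p => B p.1.1) (fun p => φ p.1.1) m v
          (fun k => (⟨τ (iv k), iv k, rfl⟩, decide ((k + 1) % 2 = 1))) ev ∧
        ℓ = m ∧ ∀ k < m, iu k = iv k ∧ eu k = ev k)) := by
  have hT {m' : ℕ} {w : ℕ → H} {iw : ℕ → Fin n} {ew : ℕ → ℤ}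
      (hw : ReducedWord A B m' w iw ew) :
      ReducedWord (fun p : {j : Fin n // ∃ i, τ i = j} × Bool => A p.1.1) (fun p => B p.1.1)
        m' w (fun k => (⟨τ (iw k), iw k, rfl⟩, decide ((k + 1) % 2 = 1))) ew :=
    reducedWord_of_ne_succ hw.1 fun k h => by
      have := congrArg Prod.snd h
      simp only [decide_eq_decide] at this
      omega
  refine ⟨hT hu, hT hv, ?_⟩
  exact ReducedWord.wordProd_eq_iff_relabel (φ := φ)
    (fun p : {j : Fin n // ∃ i, τ i = j} × Bool => p.1.1)
    (fun k i => (⟨τ i, i, rfl⟩, decide ((k + 1) % 2 = 1))) (fun _ i => (hτ i).1) hu hv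
    (hT hu) (hT hv)
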